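/- Let m ∈ ℕ with m ≥ 3 and let q > m/2. Then every function v ∈ L^q(ℝ^m, Lebesgue measure) satisfies the Kato condition on ℝ^m, i.e. lim_{t → 0⁺} sup_{x ∈ ℝ^m} ∫₀^t ∫_{ℝ^m} (4πs)^{−m/2} exp(−|x − y|²/(4s)) |v(y)| dy ds = 0. -/

import Mathlib

/-!
By Hölder's inequality with the exponent `p` conjugate to `q`, the inner integral is at most
`‖K_s(x - ·)‖_p ‖v‖_q` for the heat kernel `K_s`, and a Gaussian integral gives
`‖K_s‖_p = p^(-m/2p) (4πs)^(-m/2q)`, uniformly in `x`. Since `q > m/2`, the power `s^(-m/2q)`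
is integrable at `0`, so the time integral over `(0, t]` is `O(t^(1 - m/2q))`, which tends to `0`.
-/

open MeasureTheory

/-- A Borel function `v : ℝ^N → ℝ` (with `N = card ι`) satisfies the Kato condition if
`lim_{t → 0⁺} sup_x ∫₀ᵗ ∫ (4πs)^{-N/2} exp(-|x-y|²/(4s)) |v(y)| dy ds = 0`,
where `(4πs)^{-N/2} exp(-|x-y|²/(4s))` is the heat kernel of `e^{sΔ}` on `ℝ^N`. -/
def IsKato {ι : Type*} [Fintype ι] (v : EuclideanSpace ℝ ι → ℝ) : Prop :=
  Filter.Tendsto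
    (fun t : ℝ => ⨆ x : EuclideanSpace ℝ ι,
      ∫⁻ s in Set.Ioc (0 : ℝ) t, ∫⁻ y,
        ENNReal.ofReal ((4 * Real.pi * s) ^ (-(Fintype.card ι : ℝ) / 2) *
          Real.exp (-‖x - y‖ ^ 2 / (4 * s)) * |v y|))
    (nhdsWithin 0 (Set.Ioi 0)) (nhds 0)

open Module Real Set Filter Topology

section HeatKernel

variable {V : Type*} [NormedAddCommGroup V] [InnerProductSpace ℝ V] [FiniteDimensional ℝ V]
  [MeasurableSpace V] [BorelSpace V]

noncomputable def heatKernel (s : ℝ) (z : V) : ℝ :=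
  (4 * π * s) ^ (-(finrank ℝ V : ℝ) / 2) * exp (-‖z‖ ^ 2 / (4 * s))

theorem lintegral_ofReal_exp_neg_mul_norm_sub_sq {b : ℝ} (hb : 0 < b) (x : V) :
    ∫⁻ y, ENNReal.ofReal (exp (-b * ‖x - y‖ ^ 2)) =
      ENNReal.ofReal ((π / b) ^ (finrank ℝ V / 2 : ℝ)) := by
  have hint : Integrable fun z : V => exp (-b * ‖z‖ ^ 2) := by
    simpa [Complex.norm_exp, ← Complex.ofReal_pow] using
      (GaussianFourier.integrable_cexp_neg_mul_sq_norm_add (V := V) (b := b)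
        (by simpa using hb) 0 0).norm
  rw [lintegral_sub_left_eq_self (fun z : V => ENNReal.ofReal (exp (-b * ‖z‖ ^ 2))) x,
    ← ofReal_integral_eq_lintegral_ofReal hint (ae_of_all _ fun z => (exp_pos _).le),
    GaussianFourier.integral_rexp_neg_mul_sq_norm hb]

theorem lintegral_heatKernel_rpow_rpow_inv {p q s : ℝ} (hpq : p.HolderConjugate q)
    (hs : 0 < s) (x : V) :
    (∫⁻ y, ENNReal.ofReal (heatKernel s (x - y)) ^ p) ^ (1 / p) =
      ENNReal.ofReal (p ^ (-(finrank ℝ V / (2 * p) : ℝ)) *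
        (4 * π * s) ^ (-(finrank ℝ V / (2 * q) : ℝ))) := by
  set d : ℝ := (finrank ℝ V : ℝ)
  have hp := hpq.pos
  have hA : 0 < 4 * π * s := by positivity
  have hK : ∀ y, ENNReal.ofReal (heatKernel s (x - y)) ^ p =
      ENNReal.ofReal ((4 * π * s) ^ (-d / 2 * p)) *
        ENNReal.ofReal (exp (-(p / (4 * s)) * ‖x - y‖ ^ 2)) := by
    intro y
    rw [heatKernel, ENNReal.ofReal_rpow_of_nonneg (by positivity) hp.le,
      mul_rpow (by positivity) (exp_pos _).le, ← rpow_mul hA.le, ← exp_mul,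
      ENNReal.ofReal_mul (by positivity)]
    congr 3
    ring
  simp_rw [hK]
  rw [lintegral_const_mul' _ _ ENNReal.ofReal_ne_top,
    lintegral_ofReal_exp_neg_mul_norm_sub_sq (by positivity), ← ENNReal.ofReal_mul (by positivity),
    ENNReal.ofReal_rpow_of_nonneg (by positivity) (by positivity)]
  congr 1
  have hdiv : π / (p / (4 * s)) = (4 * π * s) * p⁻¹ := by field_simp
  have hexp : (-d / 2 * p + d / 2) * (1 / p) = -(d / (2 * q)) := by
    rw [div_mul_eq_div_div_swap, div_eq_mul_inv _ q, ← hpq.one_sub_inv]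
    field_simp
    ring
  rw [hdiv, mul_rpow hA.le (inv_nonneg.2 hp.le), ← mul_assoc, ← rpow_add hA,
    mul_rpow (by positivity) (by positivity), ← rpow_mul hA.le, hexp, ← rpow_mul (by positivity),
    inv_rpow hp.le, ← rpow_neg hp.le, mul_comm]
  congr 2
  ring

theorem lintegral_heatKernel_mul_le {p q s : ℝ} (hpq : p.HolderConjugate q) (hs : 0 < s)
    (x : V) {f : V → ℝ} (hf : AEMeasurable f) :
    ∫⁻ y, ENNReal.ofReal (heatKernel s (x - y) * |f y|) ≤
      ENNReal.ofReal (p ^ (-(finrank ℝ V / (2 * p) : ℝ)) *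
        (4 * π * s) ^ (-(finrank ℝ V / (2 * q) : ℝ))) * eLpNorm f (ENNReal.ofReal q) volume := by
  have hK_meas : Measurable fun y => ENNReal.ofReal (heatKernel s (x - y)) := by
    unfold heatKernel; fun_prop
  calc ∫⁻ y, ENNReal.ofReal (heatKernel s (x - y) * |f y|)
      = ∫⁻ y, ((fun y => ENNReal.ofReal (heatKernel s (x - y))) *
          fun y => ENNReal.ofReal |f y|) y := by
        refine lintegral_congr fun y => ENNReal.ofReal_mul ?_
        unfold heatKernel; positivity
    _ ≤ (∫⁻ y, ENNReal.ofReal (heatKernel s (x - y)) ^ p) ^ (1 / p) *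
          (∫⁻ y, ENNReal.ofReal |f y| ^ q) ^ (1 / q) :=
        ENNReal.lintegral_mul_le_Lp_mul_Lq volume hpq hK_meas.aemeasurable hf.abs.ennreal_ofReal
    _ = _ := by
        rw [lintegral_heatKernel_rpow_rpow_inv hpq hs, eLpNorm_eq_lintegral_rpow_enorm_toReal
          (by simpa using hpq.symm.pos) ENNReal.ofReal_ne_top,
          ENNReal.toReal_ofReal hpq.symm.nonneg]
        simp only [Real.enorm_eq_ofReal_abs]

end HeatKernel

theorem lintegral_Ioc_ofReal_rpow_neg {α t : ℝ} (hα : α < 1) (ht : 0 ≤ t) :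
    ∫⁻ s in Ioc 0 t, ENNReal.ofReal (s ^ (-α)) = ENNReal.ofReal (t ^ (1 - α) / (1 - α)) := by
  have hint : IntegrableOn (fun s : ℝ => s ^ (-α)) (Ioc 0 t) :=
    (intervalIntegral.intervalIntegrable_rpow' (by linarith)).1
  have hnonneg : 0 ≤ᵐ[volume.restrict (Ioc 0 t)] fun s : ℝ => s ^ (-α) :=
    (ae_restrict_iff' measurableSet_Ioc).2 (ae_of_all _ fun s hs => (rpow_pos_of_pos hs.1 _).le)
  rw [← ofReal_integral_eq_lintegral_ofReal hint hnonneg,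
    ← intervalIntegral.integral_of_le ht, integral_rpow (Or.inl (by linarith)),
    zero_rpow (by linarith), neg_add_eq_sub]
  simp

theorem isKato_of_lintegral_heatKernel_mul_le {ι : Type*} [Fintype ι]
    {v : EuclideanSpace ℝ ι → ℝ} {α : ℝ} (hα : α < 1) {C : ENNReal} (hC : C ≠ ⊤)
    (h : ∀ s > 0, ∀ x, ∫⁻ y, ENNReal.ofReal (heatKernel s (x - y) * |v y|) ≤
      C * ENNReal.ofReal (s ^ (-α))) :
    IsKato v := by
  have hbound : ∀ t > 0, ⨆ x : EuclideanSpace ℝ ι, ∫⁻ s in Ioc 0 t, ∫⁻ y,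
      ENNReal.ofReal ((4 * π * s) ^ (-(Fintype.card ι : ℝ) / 2) *
        exp (-‖x - y‖ ^ 2 / (4 * s)) * |v y|) ≤ C * ENNReal.ofReal (t ^ (1 - α) / (1 - α)) := by
    intro t ht
    refine iSup_le fun x => ?_
    calc _ ≤ ∫⁻ s in Ioc 0 t, C * ENNReal.ofReal (s ^ (-α)) :=
          setLIntegral_mono' measurableSet_Ioc fun s hs => by
            simpa [heatKernel, finrank_euclideanSpace] using h s hs.1 x
      _ = _ := by rw [lintegral_const_mul' _ _ hC, lintegral_Ioc_ofReal_rpow_neg hα ht.le]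
  have hlim : Tendsto (fun t : ℝ => C * ENNReal.ofReal (t ^ (1 - α) / (1 - α))) (𝓝[>] 0) (𝓝 0) := by
    have hcont : ContinuousAt (fun t : ℝ => ENNReal.ofReal (t ^ (1 - α) / (1 - α))) 0 :=
      ENNReal.continuous_ofReal.continuousAt.comp
        ((continuousAt_rpow_const 0 _ (Or.inr (by linarith))).div_const _)
    simpa [zero_rpow (by linarith : 1 - α ≠ 0)] using
      ENNReal.Tendsto.const_mul (hcont.tendsto.mono_left nhdsWithin_le_nhds) (Or.inr hC)
  exact tendsto_of_tendsto_of_tendsto_of_le_of_le' tendsto_const_nhds hlim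
    (Eventually.of_forall fun t => zero_le) (eventually_mem_nhdsWithin.mono hbound)

/-- For `m ≥ 3` and `q > m/2`, every `v ∈ L^q(ℝ^m)` satisfies the Kato condition. -/
theorem memLp_isKato (m : ℕ) (hm : 3 ≤ m) (q : ℝ) (hq : (m : ℝ) / 2 < q)
    (v : EuclideanSpace ℝ (Fin m) → ℝ)
    (hv : MemLp v (ENNReal.ofReal q) volume) : IsKato v := by
  have hq1 : 1 < q := by
    have : (3 : ℝ) ≤ m := by exact_mod_cast hm
    linarith
  obtain ⟨p, hpq⟩ : ∃ p : ℝ, p.HolderConjugate q := ⟨_, (HolderConjugate.conjExponent hq1).symm⟩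
  have hα : (m : ℝ) / (2 * q) < 1 := by
    rw [div_lt_one (by positivity)]
    linarith
  have hC : ENNReal.ofReal (p ^ (-(m / (2 * p) : ℝ)) * (4 * π) ^ (-(m / (2 * q) : ℝ))) *
      eLpNorm v (ENNReal.ofReal q) ≠ ⊤ := ENNReal.mul_ne_top ENNReal.ofReal_ne_top hv.2.ne
  refine isKato_of_lintegral_heatKernel_mul_le hα hC fun s hs x => ?_
  refine (lintegral_heatKernel_mul_le hpq hs x hv.1.aemeasurable).trans_eq ?_
  rw [finrank_euclideanSpace_fin, mul_rpow (by positivity) hs.le, ← mul_assoc,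
    ENNReal.ofReal_mul (mul_nonneg (rpow_nonneg hpq.nonneg _) (by positivity)), mul_right_comm]
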